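/- arXiv:2302.14313 — 6 statements merged into one kernel-verified Lean document; each statement's English description precedes it below -/
import Mathlib

section
/- Let A and B be finite nonempty index types and let η, ν : A × B → ℂ be unit vectors in the Hilbert space ℂ^{A×B} (i.e. Σ_{(a,b)} |η(a,b)|² = Σ_{(a,b)} |ν(a,b)|² = 1). Define their reduced density matrices η_A, ν_A : Matrix A A ℂ by (η_A)_{a a'} = Σ_b η(a,b) · conj(η(a',b)) and similarly for ν_A. If δ ≥ 0 and the trace norm of η_A − ν_A (the trace of the positive-semidefinite square root of (η_A − ν_A)ᴴ (η_A − ν_A)) is at most δ, then there exists a unitary matrix V : Matrix B B ℂ such that the Euclidean norm of the vector η − (I ⊗ V)ν is at most 2√δ, where ((I ⊗ V)ν)(a,b) = Σ_{b'} V_{b b'} ν(a, b'). -/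
open Matrix Finset
open scoped ComplexOrder

/-- The positive semidefinite square root of a positive semidefinite matrix
(as defined in Mathlib of December 2024; removed from Mathlib since). -/
noncomputable def Matrix.PosSemidef.sqrt {n 𝕜 : Type*} [Fintype n] [RCLike 𝕜] [DecidableEq n]
    {A : Matrix n n 𝕜} (hA : A.PosSemidef) : Matrix n n 𝕜 :=
  hA.1.eigenvectorUnitary.1 * diagonal ((↑) ∘ Real.sqrt ∘ hA.1.eigenvalues) *
    (star hA.1.eigenvectorUnitary : Matrix n n 𝕜)

open scoped MatrixOrder in
lemma Matrix.PosSemidef.sqrt_eq_CFC {n : Type*} [Fintype n] [DecidableEq n]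
    {A : Matrix n n ℂ} (hA : A.PosSemidef) : hA.sqrt = CFC.sqrt A := by
  rw [CFC.sqrt_eq_cfc, cfc_nnreal_eq_real _ A hA.nonneg, hA.1.cfc_eq]
  simp only [IsHermitian.cfc, Unitary.conjStarAlgAut_apply, Matrix.PosSemidef.sqrt]
  congr 3
  funext i
  simp [Real.coe_sqrt, Real.coe_toNNReal', hA.eigenvalues_nonneg i]

open scoped MatrixOrder in
lemma Matrix.PosSemidef.posSemidef_sqrt {n : Type*} [Fintype n] [DecidableEq n]
    {A : Matrix n n ℂ} (hA : A.PosSemidef) : hA.sqrt.PosSemidef := by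
  rw [hA.sqrt_eq_CFC]
  exact (CFC.sqrt_nonneg A).posSemidef

open scoped MatrixOrder in
lemma Matrix.PosSemidef.sq_sqrt {n : Type*} [Fintype n] [DecidableEq n]
    {A : Matrix n n ℂ} (hA : A.PosSemidef) : hA.sqrt ^ 2 = A := by
  rw [hA.sqrt_eq_CFC]
  exact CFC.sq_sqrt A hA.nonneg

open scoped MatrixOrder in
lemma Matrix.PosSemidef.sqrt_mul_self {n : Type*} [Fintype n] [DecidableEq n]
    {A : Matrix n n ℂ} (hA : A.PosSemidef) : hA.sqrt * hA.sqrt = A := by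
  rw [hA.sqrt_eq_CFC]
  exact CFC.sqrt_mul_sqrt_self A hA.nonneg

open scoped MatrixOrder in
lemma Matrix.PosSemidef.eq_sqrt_of_sq_eq {n : Type*} [Fintype n] [DecidableEq n]
    {A B : Matrix n n ℂ} (hA : A.PosSemidef) (hB : B.PosSemidef) (hAB : A ^ 2 = B) :
    A = hB.sqrt := by
  rw [hB.sqrt_eq_CFC, eq_comm, CFC.sqrt_eq_iff B A hB.nonneg hA.nonneg, ← hAB, sq]

noncomputable def tn {m n : Type*} [Fintype m] [Fintype n] [DecidableEq n]
    (X : Matrix m n ℂ) : ℝ :=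
  ((Matrix.posSemidef_conjTranspose_mul_self X).sqrt).trace.re

-- trace norm depends only on XᴴX
lemma tn_congr {m m' n : Type*} [Fintype m] [Fintype m'] [Fintype n] [DecidableEq n]
    {X : Matrix m n ℂ} {Y : Matrix m' n ℂ} (h : Xᴴ * X = Yᴴ * Y) : tn X = tn Y := by
  unfold tn
  have h1 := (Matrix.posSemidef_conjTranspose_mul_self X).posSemidef_sqrt
  have h2 : ((Matrix.posSemidef_conjTranspose_mul_self X).sqrt) ^ 2 = Yᴴ * Y := by
    rw [Matrix.PosSemidef.sq_sqrt, h]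
  rw [h1.eq_sqrt_of_sq_eq (Matrix.posSemidef_conjTranspose_mul_self Y) h2]

lemma tn_eq_of {m n : Type*} [Fintype m] [Fintype n] [DecidableEq n]
    (X : Matrix m n ℂ) (V : Matrix n n ℂ) (hV : V ∈ Matrix.unitaryGroup n ℂ)
    (D : n → ℝ) (hD : ∀ i, 0 ≤ D i)
    (h : Xᴴ * X = V * Matrix.diagonal (fun i => (D i : ℂ)) * Vᴴ) :
    tn X = ∑ i, Real.sqrt (D i) := by
  have hVV : Vᴴ * V = 1 := Matrix.mem_unitaryGroup_iff'.mp hV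
  set S : Matrix n n ℂ := V * Matrix.diagonal (fun i => (Real.sqrt (D i) : ℂ)) * Vᴴ with hS
  have hdiag : Matrix.PosSemidef (Matrix.diagonal (fun i => (Real.sqrt (D i) : ℂ))) := by
    rw [Matrix.posSemidef_diagonal_iff]
    intro i
    exact_mod_cast Complex.zero_le_real.mpr (Real.sqrt_nonneg _)
  have hSpsd : Matrix.PosSemidef S := hdiag.mul_mul_conjTranspose_same V
  have cancel : ∀ (Y : Matrix n n ℂ), Vᴴ * (V * Y) = Y := by
    intro Y; rw [← Matrix.mul_assoc, hVV, Matrix.one_mul]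
  have hsq : S ^ 2 = Xᴴ * X := by
    rw [h, pow_two, hS]
    simp only [Matrix.mul_assoc]
    rw [cancel, ← Matrix.mul_assoc (Matrix.diagonal _), Matrix.diagonal_mul_diagonal]
    have : (fun i => (Real.sqrt (D i) : ℂ) * Real.sqrt (D i)) = fun i => (D i : ℂ) := by
      funext i; rw [← Complex.ofReal_mul, Real.mul_self_sqrt (hD i)]
    rw [this]
  have := hSpsd.eq_sqrt_of_sq_eq (Matrix.posSemidef_conjTranspose_mul_self X) hsq
  unfold tn
  rw [← this, hS, Matrix.trace_mul_comm, ← Matrix.mul_assoc, hVV, Matrix.one_mul,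
    Matrix.trace_diagonal]
  push_cast
  simp

lemma gram_spec {m n : Type*} [Fintype m] [Fintype n] [DecidableEq n] (X : Matrix m n ℂ) :
    ∃ (V : Matrix n n ℂ) (D : n → ℝ), V ∈ Matrix.unitaryGroup n ℂ ∧ (∀ i, 0 ≤ D i) ∧
      Xᴴ * X = V * Matrix.diagonal (fun i => (D i : ℂ)) * Vᴴ ∧
      tn X = ∑ i, Real.sqrt (D i) ∧
      (X * V)ᴴ * (X * V) = Matrix.diagonal (fun i => (D i : ℂ)) := by
  have hp := Matrix.posSemidef_conjTranspose_mul_self X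
  have hH := hp.1
  refine ⟨(hH.eigenvectorUnitary : Matrix n n ℂ), hH.eigenvalues,
    hH.eigenvectorUnitary.2, fun i => hp.eigenvalues_nonneg i, ?_, ?_, ?_⟩
  case _ =>
    have := hH.spectral_theorem
    rw [Unitary.conjStarAlgAut_apply, Matrix.star_eq_conjTranspose] at this
    exact this
  case _ =>
    apply tn_eq_of X _ hH.eigenvectorUnitary.2 _ (fun i => hp.eigenvalues_nonneg i)
    have := hH.spectral_theorem
    rw [Unitary.conjStarAlgAut_apply, Matrix.star_eq_conjTranspose] at this
    exact this
  case _ =>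
    have hs := hH.spectral_theorem
    rw [Unitary.conjStarAlgAut_apply, Matrix.star_eq_conjTranspose] at hs
    set V : Matrix n n ℂ := (hH.eigenvectorUnitary : Matrix n n ℂ) with hVdef
    have hVV : Vᴴ * V = 1 := Matrix.mem_unitaryGroup_iff'.mp hH.eigenvectorUnitary.2
    have c1 : ∀ Y : Matrix n n ℂ, Vᴴ * (V * Y) = Y := by
      intro Y; rw [← Matrix.mul_assoc, hVV, Matrix.one_mul]
    have step : (X * V)ᴴ * (X * V) = Vᴴ * ((Xᴴ * X) * V) := by
      rw [Matrix.conjTranspose_mul]; simp only [Matrix.mul_assoc]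
    have e1 : Vᴴ * (Xᴴ * X * V) =
        Vᴴ * ((V * Matrix.diagonal (RCLike.ofReal ∘ hH.eigenvalues) * Vᴴ) * V) :=
      congrArg (fun Z => Vᴴ * (Z * V)) hs
    rw [step, e1]
    simp only [Matrix.mul_assoc]
    rw [hVV, Matrix.mul_one, c1]
    congr 1

lemma gdg_apply {m n : Type*} [Fintype m] [Fintype n] [DecidableEq n]
    (G : Matrix m n ℂ) (f : n → ℂ) (a a' : m) :
    (G * Matrix.diagonal f * Gᴴ) a a' = ∑ i, G a i * f i * star (G a' i) := by
  rw [Matrix.mul_apply]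
  simp only [Matrix.mul_diagonal, Matrix.conjTranspose_apply]

lemma col_zero {m n : Type*} [Fintype m] [Fintype n] [DecidableEq n]
    (G : Matrix m n ℂ) (D : n → ℝ)
    (hG : Gᴴ * G = Matrix.diagonal (fun i => (D i : ℂ))) {i : n} (hDi : D i = 0) (a : m) :
    G a i = 0 := by
  have h1 : (Gᴴ * G) i i = 0 := by rw [hG]; simp [hDi]
  rw [Matrix.mul_apply] at h1
  simp only [Matrix.conjTranspose_apply, Matrix.star_apply] at h1
  have h2 : ∑ a : m, Complex.normSq (G a i) = 0 := by
    have := congrArg Complex.re h1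
    simpa [Complex.mul_conj', Complex.normSq_apply] using this
  have h3 := (Finset.sum_eq_zero_iff_of_nonneg (fun a _ => Complex.normSq_nonneg (G a i))).mp h2
  exact Complex.normSq_eq_zero.mp (h3 a (Finset.mem_univ a))

lemma tn_conjTranspose {m n : Type*} [Fintype m] [Fintype n] [DecidableEq m] [DecidableEq n]
    (X : Matrix m n ℂ) : tn Xᴴ = tn X := by
  obtain ⟨V, D, hV, hD, hXX, htn, hG⟩ := gram_spec X
  set G := X * V with hGdef
  set c : n → ℝ := fun i => if D i = 0 then 0 else (Real.sqrt (D i))⁻¹ with hc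
  have hcnn : ∀ i, 0 ≤ c i := by
    intro i; rw [hc]; dsimp only; split
    · rfl
    · positivity
  have hcDc : ∀ i, (c i : ℂ) * (D i : ℂ) * (c i : ℂ) = if D i = 0 then 0 else 1 := by
    intro i
    have : c i * D i * c i = if D i = 0 then 0 else 1 := by
      rw [hc]; dsimp only
      by_cases hDi : D i = 0
      · simp [hDi]
      · rw [if_neg hDi, if_neg hDi]
        have hpos : 0 < D i := lt_of_le_of_ne (hD i) (Ne.symm hDi)
        have hs : Real.sqrt (D i) ≠ 0 := (Real.sqrt_pos.mpr hpos).ne'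
        field_simp
        exact (Real.sq_sqrt (hD i)).symm
    calc (c i : ℂ) * (D i : ℂ) * (c i : ℂ) = ((c i * D i * c i : ℝ) : ℂ) := by push_cast; ring
    _ = if D i = 0 then 0 else 1 := by rw [this]; split <;> simp
  set R : Matrix m m ℂ := G * Matrix.diagonal (fun i => (c i : ℂ)) * Gᴴ with hR
  have hRpsd : Matrix.PosSemidef R := by
    apply Matrix.PosSemidef.mul_mul_conjTranspose_same
    rw [Matrix.posSemidef_diagonal_iff]
    intro i
    exact_mod_cast Complex.zero_le_real.mpr (hcnn i)
  have hGG : G * Gᴴ = X * Xᴴ := by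
    have hVV' : V * Vᴴ = 1 := Matrix.mem_unitaryGroup_iff.mp hV
    rw [hGdef, Matrix.conjTranspose_mul, Matrix.mul_assoc, ← Matrix.mul_assoc V, hVV',
      Matrix.one_mul]
  have hsq : R ^ 2 = Xᴴᴴ * Xᴴ := by
    rw [Matrix.conjTranspose_conjTranspose, pow_two, hR]
    have assoc : G * Matrix.diagonal (fun i => (c i : ℂ)) * Gᴴ *
        (G * Matrix.diagonal (fun i => (c i : ℂ)) * Gᴴ)
        = G * (Matrix.diagonal (fun i => (c i : ℂ)) * (Gᴴ * G) *
            Matrix.diagonal (fun i => (c i : ℂ))) * Gᴴ := by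
      simp only [Matrix.mul_assoc]
    rw [assoc, hG, Matrix.diagonal_mul_diagonal, Matrix.diagonal_mul_diagonal]
    rw [← hGG]
    ext a a'
    rw [show G * Matrix.diagonal (fun i => (c i : ℂ) * (D i : ℂ) * (c i : ℂ)) * Gᴴ =
      G * Matrix.diagonal (fun i => if D i = 0 then (0:ℂ) else 1) * Gᴴ from by
        have : (fun i => (c i : ℂ) * (D i : ℂ) * (c i : ℂ))
            = (fun i => if D i = 0 then (0:ℂ) else 1) := funext hcDc
        rw [this]]
    rw [gdg_apply, Matrix.mul_apply]
    apply Finset.sum_congr rfl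
    intro i _
    by_cases hDi : D i = 0
    · rw [col_zero G D hG hDi a]
      simp
    · rw [if_neg hDi, mul_one, Matrix.conjTranspose_apply]
  have heq := hRpsd.eq_sqrt_of_sq_eq (Matrix.posSemidef_conjTranspose_mul_self Xᴴ) hsq
  have tr1 : R.trace = ∑ i, ((D i : ℂ) * (c i : ℂ)) := by
    rw [hR, Matrix.trace_mul_comm, ← Matrix.mul_assoc, hG, Matrix.diagonal_mul_diagonal,
      Matrix.trace_diagonal]
  show ((Matrix.posSemidef_conjTranspose_mul_self Xᴴ).sqrt).trace.re = tn X
  rw [← heq, tr1, htn]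
  rw [show (∑ i, ((D i : ℂ) * (c i : ℂ))).re = ∑ i, (D i * c i) from by push_cast; simp]
  apply Finset.sum_congr rfl
  intro i _
  rw [hc]; dsimp only
  by_cases hDi : D i = 0
  · simp [hDi]
  · rw [if_neg hDi]
    have hpos : 0 < D i := lt_of_le_of_ne (hD i) (Ne.symm hDi)
    have hs : Real.sqrt (D i) ≠ 0 := (Real.sqrt_pos.mpr hpos).ne'
    field_simp
    exact (Real.sq_sqrt (hD i)).symm

lemma trace_re_le_tn {n : Type*} [Fintype n] [DecidableEq n] (X : Matrix n n ℂ) :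
    X.trace.re ≤ tn X := by
  obtain ⟨V, D, hV, hD, hXX, htn, hG⟩ := gram_spec X
  have hVV : Vᴴ * V = 1 := Matrix.mem_unitaryGroup_iff'.mp hV
  have hVV' : V * Vᴴ = 1 := Matrix.mem_unitaryGroup_iff.mp hV
  set Y : Matrix n n ℂ := Vᴴ * (X * V) with hY
  have htr : X.trace = Y.trace := by
    rw [hY, Matrix.trace_mul_comm, Matrix.mul_assoc, hVV', Matrix.mul_one]
  have hYY : Yᴴ * Y = Matrix.diagonal (fun i => (D i : ℂ)) := by
    rw [hY, Matrix.conjTranspose_mul, Matrix.mul_assoc, ← Matrix.mul_assoc Vᴴᴴ, 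
      Matrix.conjTranspose_conjTranspose, hVV', Matrix.one_mul, hG]
  have key : ∀ i, (Y i i).re ≤ Real.sqrt (D i) := by
    intro i
    have h1 : ∑ a, Complex.normSq (Y a i) = D i := by
      have := congrArg (fun M => (M i i).re) hYY
      simp only [Matrix.mul_apply, Matrix.conjTranspose_apply, Matrix.star_apply,
        Matrix.diagonal_apply_eq] at this
      rw [show D i = ((D i : ℂ)).re by simp, ← this]
      simp [Complex.mul_conj']
      rfl
    have h2 : Complex.normSq (Y i i) ≤ D i := by
      rw [← h1]
      exact Finset.single_le_sum (fun a _ => Complex.normSq_nonneg (Y a i)) (Finset.mem_univ i)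
    calc (Y i i).re ≤ ‖Y i i‖ := Complex.re_le_norm _
    _ = Real.sqrt (Complex.normSq (Y i i)) := rfl
    _ ≤ Real.sqrt (D i) := Real.sqrt_le_sqrt h2
  rw [htr, htn, Matrix.trace]
  rw [show (∑ i, Y.diag i).re = ∑ i, (Y i i).re from by simp [Matrix.diag]]
  exact Finset.sum_le_sum fun i _ => key i

lemma herm_spec {n : Type*} [Fintype n] [DecidableEq n] {H : Matrix n n ℂ}
    (hH : H.IsHermitian) :
    ∃ (W : Matrix n n ℂ) (lam : n → ℝ), W ∈ Matrix.unitaryGroup n ℂ ∧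
      H = W * Matrix.diagonal (fun i => (lam i : ℂ)) * Wᴴ ∧
      tn H = ∑ i, |lam i| := by
  refine ⟨(hH.eigenvectorUnitary : Matrix n n ℂ), hH.eigenvalues,
    hH.eigenvectorUnitary.2, ?_, ?_⟩
  case _ =>
    have := hH.spectral_theorem
    rw [Unitary.conjStarAlgAut_apply, Matrix.star_eq_conjTranspose] at this
    exact this
  case _ =>
    set W : Matrix n n ℂ := (hH.eigenvectorUnitary : Matrix n n ℂ) with hW
    have hs : H = W * Matrix.diagonal (fun i => (hH.eigenvalues i : ℂ)) * Wᴴ := by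
      have := hH.spectral_theorem
      rw [Unitary.conjStarAlgAut_apply, Matrix.star_eq_conjTranspose] at this
      exact this
    have hWW : Wᴴ * W = 1 := Matrix.mem_unitaryGroup_iff'.mp hH.eigenvectorUnitary.2
    have hsq : Hᴴ * H = W * Matrix.diagonal
        (fun i => ((hH.eigenvalues i * hH.eigenvalues i : ℝ) : ℂ)) * Wᴴ := by
      rw [hH.eq]
      nth_rewrite 1 [hs]
      nth_rewrite 2 [hs]
      have assoc : W * Matrix.diagonal (fun i => (hH.eigenvalues i : ℂ)) * Wᴴ *
          (W * Matrix.diagonal (fun i => (hH.eigenvalues i : ℂ)) * Wᴴ)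
          = W * (Matrix.diagonal (fun i => (hH.eigenvalues i : ℂ)) * (Wᴴ * W) *
              Matrix.diagonal (fun i => (hH.eigenvalues i : ℂ))) * Wᴴ := by
        simp only [Matrix.mul_assoc]
      rw [assoc, hWW, Matrix.mul_one, Matrix.diagonal_mul_diagonal]
      congr 2
      funext i
      push_cast
      ring
    rw [tn_eq_of H W hH.eigenvectorUnitary.2 _
      (fun i => mul_self_nonneg (hH.eigenvalues i)) hsq]
    apply Finset.sum_congr rfl
    intro i _
    rw [Real.sqrt_mul_self_eq_abs]

lemma entry_abs_le_one {m n : Type*} [Fintype m] [Fintype n] [DecidableEq n]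
    {Q : Matrix m n ℂ} (hQQ : Qᴴ * Q = 1) (i : m) (j : n) : ‖Q i j‖ ≤ 1 := by
  have h1 : (Qᴴ * Q) j j = 1 := by rw [hQQ]; simp
  rw [Matrix.mul_apply] at h1
  simp only [Matrix.conjTranspose_apply, Matrix.star_apply] at h1
  have h2 : ∑ a : m, Complex.normSq (Q a j) = 1 := by
    have := congrArg Complex.re h1
    simpa [Complex.mul_conj', Complex.normSq_apply] using this
  have h3 : Complex.normSq (Q i j) ≤ 1 := by
    rw [← h2]
    exact Finset.single_le_sum (fun a _ => Complex.normSq_nonneg (Q a j)) (Finset.mem_univ i)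
  rw [← Real.sqrt_one]
  exact Real.sqrt_le_sqrt h3

lemma herm_trace_mul_unitary_le {n : Type*} [Fintype n] [DecidableEq n]
    {H S : Matrix n n ℂ} (hH : H.IsHermitian) (hS : S ∈ Matrix.unitaryGroup n ℂ) :
    (H * S).trace.re ≤ tn H := by
  obtain ⟨W, lam, hW, hspec, htn⟩ := herm_spec hH
  have hWW : Wᴴ * W = 1 := Matrix.mem_unitaryGroup_iff'.mp hW
  have hWW' : W * Wᴴ = 1 := Matrix.mem_unitaryGroup_iff.mp hW
  have hSS : Sᴴ * S = 1 := Matrix.mem_unitaryGroup_iff'.mp hS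
  have cW : ∀ Y : Matrix n n ℂ, W * (Wᴴ * Y) = Y := by
    intro Y; rw [← Matrix.mul_assoc, hWW', Matrix.one_mul]
  have cS : ∀ Y : Matrix n n ℂ, Sᴴ * (S * Y) = Y := by
    intro Y; rw [← Matrix.mul_assoc, hSS, Matrix.one_mul]
  set Q : Matrix n n ℂ := Wᴴ * S * W with hQ
  have hQQ : Qᴴ * Q = 1 := by
    rw [hQ, Matrix.conjTranspose_mul, Matrix.conjTranspose_mul,
      Matrix.conjTranspose_conjTranspose]
    simp only [Matrix.mul_assoc]
    rw [cW, cS]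
    exact hWW
  have htrace : (H * S).trace = ∑ i, (lam i : ℂ) * Q i i := by
    rw [hspec]
    have e : (W * Matrix.diagonal (fun i => (lam i : ℂ)) * Wᴴ) * S
        = W * (Matrix.diagonal (fun i => (lam i : ℂ)) * (Wᴴ * S)) := by
      simp only [Matrix.mul_assoc]
    rw [e, Matrix.trace_mul_comm, Matrix.mul_assoc, ← hQ]
    simp [Matrix.trace, Matrix.diag, Matrix.diagonal_mul]
  calc (H * S).trace.re = ∑ i, lam i * (Q i i).re := by
        rw [htrace]
        rw [Complex.re_sum]
        exact Finset.sum_congr rfl fun i _ => Complex.re_ofReal_mul _ _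
  _ ≤ ∑ i, |lam i| := by
        apply Finset.sum_le_sum
        intro i _
        calc lam i * (Q i i).re ≤ |lam i * (Q i i).re| := le_abs_self _
        _ = |lam i| * |(Q i i).re| := abs_mul _ _
        _ ≤ |lam i| * 1 := by
              apply mul_le_mul_of_nonneg_left _ (abs_nonneg _)
              calc |(Q i i).re| ≤ ‖Q i i‖ := Complex.abs_re_le_norm _
              _ ≤ 1 := entry_abs_le_one hQQ i i
        _ = |lam i| := mul_one _
  _ = tn H := htn.symm

lemma psd_conj_diag_re_nonneg {n : Type*} [Fintype n] [DecidableEq n]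
    {A : Matrix n n ℂ} (hA : A.PosSemidef) (U : Matrix n n ℂ) (i : n) :
    0 ≤ ((Uᴴ * A * U) i i).re := by
  have h := hA.dotProduct_mulVec_nonneg (fun p => U p i)
  rw [Complex.le_def] at h
  have he : (Uᴴ * A * U) i i = dotProduct (star fun p => U p i)
      (A *ᵥ fun p => U p i) := by
    rw [Matrix.mul_assoc, Matrix.mul_apply]
    simp only [Matrix.conjTranspose_apply, Matrix.star_apply, dotProduct,
      Matrix.mulVec, dotProduct, Pi.star_apply]
    apply Finset.sum_congr rfl
    intro p _
    rw [Matrix.mul_apply]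
  rw [he]
  simpa using h.1

lemma powers_stormer {n : Type*} [Fintype n] [DecidableEq n] {a b : Matrix n n ℂ}
    (ha : a.PosSemidef) (hb : b.PosSemidef) :
    ((a - b) * (a - b)).trace.re ≤ tn (a * a - b * b) := by
  set d : Matrix n n ℂ := a - b with hdd
  set s : Matrix n n ℂ := a + b with hss
  have hd : d.IsHermitian := ha.1.sub hb.1
  obtain ⟨W, lam, hW, hspec, _⟩ := herm_spec hd
  have hWW : Wᴴ * W = 1 := Matrix.mem_unitaryGroup_iff'.mp hW
  have hWW' : W * Wᴴ = 1 := Matrix.mem_unitaryGroup_iff.mp hW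
  have cW : ∀ Y : Matrix n n ℂ, W * (Wᴴ * Y) = Y := by
    intro Y; rw [← Matrix.mul_assoc, hWW', Matrix.one_mul]
  have cW' : ∀ Y : Matrix n n ℂ, Wᴴ * (W * Y) = Y := by
    intro Y; rw [← Matrix.mul_assoc, hWW, Matrix.one_mul]
  set sg : n → ℝ := fun i => if lam i < 0 then -1 else 1 with hsg
  set dg : Matrix n n ℂ := Matrix.diagonal (fun i => (sg i : ℂ)) with hdg
  set dl : Matrix n n ℂ := Matrix.diagonal (fun i => (lam i : ℂ)) with hdl
  set dabs : Matrix n n ℂ := Matrix.diagonal (fun i => ((|lam i| : ℝ) : ℂ)) with hdabs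
  set S : Matrix n n ℂ := W * dg * Wᴴ with hSdef
  set P : Matrix n n ℂ := W * dabs * Wᴴ with hPdef
  have hsg2 : ∀ i, sg i * sg i = 1 := by
    intro i; rw [hsg]; dsimp only; split <;> norm_num
  have hsglam : ∀ i, sg i * lam i = |lam i| := by
    intro i; rw [hsg]; dsimp only; split
    · rw [abs_of_neg (by assumption)]; ring
    · rw [abs_of_nonneg (le_of_not_gt (by assumption))]; ring
  have hdgdl : dg * dl = dabs := by
    rw [hdg, hdl, hdabs, Matrix.diagonal_mul_diagonal]
    rw [show (fun i => (sg i : ℂ) * (lam i : ℂ)) = fun i => ((|lam i| : ℝ) : ℂ) from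
      funext fun i => by rw [← Complex.ofReal_mul, hsglam i]]
  have hdldg : dl * dg = dabs := by
    rw [hdg, hdl, hdabs, Matrix.diagonal_mul_diagonal]
    rw [show (fun i => (lam i : ℂ) * (sg i : ℂ)) = fun i => ((|lam i| : ℝ) : ℂ) from
      funext fun i => by rw [← Complex.ofReal_mul, mul_comm, hsglam i]]
  have hdgdg : dg * dg = 1 := by
    rw [hdg, Matrix.diagonal_mul_diagonal]
    have : (fun i => (sg i : ℂ) * (sg i : ℂ)) = fun _ => (1 : ℂ) := by
      funext i; rw [← Complex.ofReal_mul, hsg2 i, Complex.ofReal_one]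
    rw [this, Matrix.diagonal_one]
  have hSunit : S ∈ Matrix.unitaryGroup n ℂ := by
    rw [Matrix.mem_unitaryGroup_iff, Matrix.star_eq_conjTranspose, hSdef]
    rw [Matrix.conjTranspose_mul, Matrix.conjTranspose_mul,
      Matrix.conjTranspose_conjTranspose, hdg, Matrix.diagonal_conjTranspose]
    have hconj : (star (fun i => (sg i : ℂ))) = fun i => (sg i : ℂ) := by
      funext i; simp [Complex.conj_ofReal]
    rw [hconj, ← hdg]
    rw [show W * dg * Wᴴ * (W * (dg * Wᴴ)) = W * (dg * (Wᴴ * (W * (dg * Wᴴ)))) from by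
      simp only [Matrix.mul_assoc]]
    rw [cW', ← Matrix.mul_assoc dg dg, hdgdg, Matrix.one_mul]
    exact hWW'
  have hdS : d * S = P := by
    rw [hspec, hSdef, hPdef]
    rw [show W * dl * Wᴴ * (W * dg * Wᴴ) = W * (dl * (Wᴴ * (W * (dg * Wᴴ)))) from by
      simp only [Matrix.mul_assoc]]
    rw [cW', ← Matrix.mul_assoc dl dg, hdldg, Matrix.mul_assoc]
  have hSd : S * d = P := by
    rw [hspec, hSdef, hPdef]
    rw [show W * dg * Wᴴ * (W * dl * Wᴴ) = W * (dg * (Wᴴ * (W * (dl * Wᴴ)))) from by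
      simp only [Matrix.mul_assoc]]
    rw [cW', ← Matrix.mul_assoc dg dl, hdgdl, Matrix.mul_assoc]
  have hds : d * s + s * d = (a * a - b * b) + (a * a - b * b) := by
    rw [hdd, hss]; noncomm_ring
  have htrS : ((a * a - b * b) * S).trace = (s * P).trace := by
    have h2 : ((d * s + s * d) * S).trace = ((a * a - b * b) * S).trace
        + ((a * a - b * b) * S).trace := by
      rw [hds, Matrix.add_mul, Matrix.trace_add]
    have h3 : ((d * s + s * d) * S).trace = (s * P).trace + (s * P).trace := by
      rw [Matrix.add_mul, Matrix.trace_add]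
      congr 1
      · rw [Matrix.mul_assoc, Matrix.trace_mul_comm, Matrix.mul_assoc, hSd]
      · rw [Matrix.mul_assoc, hdS]
    have h4 : (2 : ℂ) * ((a * a - b * b) * S).trace = 2 * (s * P).trace := by
      rw [two_mul, two_mul, ← h2, h3]
    exact mul_left_cancel₀ two_ne_zero h4
  set T : Matrix n n ℂ := Wᴴ * s * W with hT
  have htrP : (s * P).trace = ∑ i, ((|lam i| : ℝ) : ℂ) * T i i := by
    rw [hPdef, Matrix.trace_mul_comm]
    rw [show W * dabs * Wᴴ * s = W * (dabs * (Wᴴ * s)) from by simp only [Matrix.mul_assoc]]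
    rw [Matrix.trace_mul_comm, Matrix.mul_assoc, ← hT]
    rw [hdabs]
    simp [Matrix.trace, Matrix.diag, Matrix.diagonal_mul]
  have hdW : Wᴴ * d * W = dl := by
    rw [hspec]
    rw [show Wᴴ * (W * dl * Wᴴ) * W = Wᴴ * (W * (dl * (Wᴴ * W))) from by
      simp only [Matrix.mul_assoc]]
    rw [hWW, Matrix.mul_one, cW']
  have hTre : ∀ i, |lam i| ≤ (T i i).re := by
    intro i
    have hx : 0 ≤ ((Wᴴ * a * W) i i).re := psd_conj_diag_re_nonneg ha W i
    have hy : 0 ≤ ((Wᴴ * b * W) i i).re := psd_conj_diag_re_nonneg hb W i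
    have hsplitd : (Wᴴ * d * W) i i = (Wᴴ * a * W) i i - (Wᴴ * b * W) i i := by
      rw [hdd, Matrix.mul_sub, Matrix.sub_mul]
      simp [Matrix.sub_apply]
    have hsplits : T i i = (Wᴴ * a * W) i i + (Wᴴ * b * W) i i := by
      rw [hT, hss, Matrix.mul_add, Matrix.add_mul]
      simp [Matrix.add_apply]
    have hlam : ((Wᴴ * a * W) i i).re - ((Wᴴ * b * W) i i).re = lam i := by
      have := congrArg (fun M => (M i i).re) hdW
      rw [hsplitd] at this
      rw [hdl] at this
      simpa [Complex.sub_re] using this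
    rw [hsplits, Complex.add_re, ← hlam]
    apply abs_le.mpr
    constructor <;> linarith
  have hab : (a * a - b * b).IsHermitian := by
    show (a * a - b * b)ᴴ = a * a - b * b
    rw [Matrix.conjTranspose_sub, Matrix.conjTranspose_mul, Matrix.conjTranspose_mul,
      ha.1.eq, hb.1.eq]
  have hdd2 : (d * d).trace = ∑ i, ((lam i * lam i : ℝ) : ℂ) := by
    rw [hspec]
    rw [show W * dl * Wᴴ * (W * dl * Wᴴ) = W * (dl * (Wᴴ * (W * (dl * Wᴴ)))) from by
      simp only [Matrix.mul_assoc]]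
    rw [cW', ← Matrix.mul_assoc dl dl, Matrix.trace_mul_comm]
    rw [show (dl * dl * Wᴴ) * W = dl * dl * (Wᴴ * W) from by simp only [Matrix.mul_assoc]]
    rw [hWW, Matrix.mul_one, hdl, Matrix.diagonal_mul_diagonal, Matrix.trace_diagonal]
    push_cast
    ring
  calc (d * d).trace.re = ∑ i, lam i * lam i := by
        rw [hdd2, Complex.re_sum]
        exact Finset.sum_congr rfl fun i _ => Complex.ofReal_re _
  _ ≤ ∑ i, |lam i| * (T i i).re := by
        apply Finset.sum_le_sum
        intro i _
        calc lam i * lam i = |lam i| * |lam i| := (abs_mul_abs_self _).symm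
        _ ≤ |lam i| * (T i i).re :=
            mul_le_mul_of_nonneg_left (hTre i) (abs_nonneg _)
  _ = ((a * a - b * b) * S).trace.re := by
        rw [htrS, htrP, Complex.re_sum]
        exact Finset.sum_congr rfl fun i _ => (Complex.re_ofReal_mul _ _).symm
  _ ≤ tn (a * a - b * b) := herm_trace_mul_unitary_le hab hSunit

set_option maxHeartbeats 1000000 in
lemma polar_exists {n : Type*} [Fintype n] [DecidableEq n] (X : Matrix n n ℂ) :
    ∃ U ∈ Matrix.unitaryGroup n ℂ, ((X * U).trace).re = tn X := by
  obtain ⟨V, D, hV, hD, hXX, htn, hG⟩ := gram_spec X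
  set G := X * V with hGdef
  set g : n → EuclideanSpace ℂ n := fun i => WithLp.toLp 2 (fun a => G a i) with hg
  have hinner : ∀ i j, inner ℂ (g i) (g j) = Matrix.diagonal (fun k => (D k : ℂ)) i j := by
    intro i j
    rw [← hG, Matrix.mul_apply]
    simp only [PiLp.inner_apply, RCLike.inner_apply, Matrix.conjTranspose_apply,
      Matrix.star_apply]
    exact Finset.sum_congr rfl fun _ _ => mul_comm _ _
  set s : Set n := {i | D i ≠ 0} with hs
  set v : n → EuclideanSpace ℂ n :=
    fun i => (((Real.sqrt (D i))⁻¹ : ℝ) : ℂ) • g i with hv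
  have horth : Orthonormal ℂ (s.restrict v) := by
    rw [orthonormal_iff_ite]
    rintro ⟨i, hi⟩ ⟨j, hj⟩
    change inner ℂ (v i) (v j) = _
    rw [hv]
    dsimp only
    rw [inner_smul_left, inner_smul_right, hinner i j]
    by_cases hij : i = j
    · subst hij
      rw [if_pos rfl, Matrix.diagonal_apply_eq]
      have hDi : 0 < D i := lt_of_le_of_ne (hD i) (Ne.symm hi)
      rw [Complex.conj_ofReal, ← Complex.ofReal_mul, ← Complex.ofReal_mul]
      norm_cast
      rw [show (Real.sqrt (D i))⁻¹ * ((Real.sqrt (D i))⁻¹ * D i)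
          = D i / (Real.sqrt (D i) * Real.sqrt (D i)) from by ring]
      rw [Real.mul_self_sqrt (hD i), div_self hDi.ne']
    · rw [Matrix.diagonal_apply_ne _ hij, if_neg (by simpa [Subtype.mk_eq_mk] using hij)]
      ring
  obtain ⟨b, hb⟩ := horth.exists_orthonormalBasis_extension_of_card_eq
    (finrank_euclideanSpace (𝕜 := ℂ))
  set Z : Matrix n n ℂ := fun a i => b i a with hZ
  have hbij := orthonormal_iff_ite.mp b.orthonormal
  have hinner_b : ∀ (x y : EuclideanSpace ℂ n),
      inner ℂ x y = ∑ a, (starRingEnd ℂ) (x a) * y a := by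
    intro x y
    simp [PiLp.inner_apply, RCLike.inner_apply]
    exact Finset.sum_congr rfl fun _ _ => mul_comm _ _
  have hZZ : Zᴴ * Z = 1 := by
    ext i j
    rw [Matrix.mul_apply, Matrix.one_apply]
    have hthis := hbij i j
    rw [hinner_b] at hthis
    rw [← hthis]
    apply Finset.sum_congr rfl
    intro a _
    rw [Matrix.conjTranspose_apply]
    rfl
  have hZH : Zᴴ ∈ Matrix.unitaryGroup n ℂ := by
    rw [Matrix.mem_unitaryGroup_iff, Matrix.star_eq_conjTranspose,
      Matrix.conjTranspose_conjTranspose]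
    exact hZZ
  refine ⟨V * Zᴴ, mul_mem hV hZH, ?_⟩
  have htr : (X * (V * Zᴴ)).trace = ∑ i, ((Real.sqrt (D i) : ℝ) : ℂ) := by
    rw [← Matrix.mul_assoc, ← hGdef]
    calc (G * Zᴴ).trace = ∑ a, ∑ i, G a i * star (b i a) := by
          rw [Matrix.trace]
          apply Finset.sum_congr rfl
          intro a _
          rw [Matrix.diag]
          rw [Matrix.mul_apply]
          apply Finset.sum_congr rfl
          intro i _
          rw [Matrix.conjTranspose_apply]
    _ = ∑ i, ∑ a, (starRingEnd ℂ) (b i a) * G a i := by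
          rw [Finset.sum_comm]
          apply Finset.sum_congr rfl
          intro i _
          apply Finset.sum_congr rfl
          intro a _
          rw [mul_comm]
          rfl
    _ = ∑ i, inner ℂ (b i) (g i) := by
          apply Finset.sum_congr rfl
          intro i _
          rw [hinner_b]
    _ = ∑ i, ((Real.sqrt (D i) : ℝ) : ℂ) := by
          apply Finset.sum_congr rfl
          intro i _
          by_cases hDi : D i = 0
          · have hcol : ∀ a, G a i = 0 := col_zero G D hG hDi
            have hgz : g i = 0 := by
              ext a
              exact hcol a
            rw [hgz, inner_zero_right, hDi, Real.sqrt_zero, Complex.ofReal_zero]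
          · have hbi : b i = v i := hb i hDi
            rw [hbi, hv]
            dsimp only
            rw [inner_smul_left, hinner i i, Matrix.diagonal_apply_eq, Complex.conj_ofReal,
              ← Complex.ofReal_mul, inv_mul_eq_div, Real.div_sqrt]
  rw [htr, htn, Complex.re_sum]
  exact Finset.sum_congr rfl fun i _ => Complex.ofReal_re _

lemma trace_outer_eq_one {A B : Type*} [Fintype A] [Fintype B] (f : A × B → ℂ)
    (hf : ∑ x : A × B, ‖f x‖ ^ 2 = 1) :
    ((Matrix.of fun a b => f (a, b)) * (Matrix.of fun a b => f (a, b))ᴴ).trace = 1 := by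
  have : ((Matrix.of fun a b => f (a, b)) * (Matrix.of fun a b => f (a, b))ᴴ).trace
      = ∑ a : A, ∑ b : B, ((‖f (a, b)‖ ^ 2 : ℝ) : ℂ) := by
    rw [Matrix.trace]
    apply Finset.sum_congr rfl
    intro a _
    rw [Matrix.diag, Matrix.mul_apply]
    apply Finset.sum_congr rfl
    intro bb _
    rw [Matrix.conjTranspose_apply]
    rw [show (Matrix.of fun a b => f (a, b)) a bb * star ((Matrix.of fun a b => f (a, b)) a bb)
        = f (a, bb) * (starRingEnd ℂ) (f (a, bb)) from rfl]
    rw [Complex.mul_conj, Complex.sq_norm]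
  rw [this]
  rw [show ∑ a : A, ∑ b : B, ((‖f (a, b)‖ ^ 2 : ℝ) : ℂ)
      = ((∑ a : A, ∑ b : B, ‖f (a, b)‖ ^ 2 : ℝ) : ℂ) from by push_cast; rfl]
  rw [Fintype.sum_prod_type] at hf
  rw [hf, Complex.ofReal_one]

lemma frob_re {A B : Type*} [Fintype A] [Fintype B] [DecidableEq B] (P : Matrix A B ℂ) :
    (Pᴴ * P).trace.re = ∑ x : A × B, ‖P x.1 x.2‖ ^ 2 := by
  have h1 : (Pᴴ * P).trace = ∑ b : B, ∑ a : A, ((‖P a b‖ ^ 2 : ℝ) : ℂ) := by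
    rw [Matrix.trace]
    apply Finset.sum_congr rfl
    intro b _
    rw [Matrix.diag, Matrix.mul_apply]
    apply Finset.sum_congr rfl
    intro a _
    rw [Matrix.conjTranspose_apply]
    rw [show star (P a b) = (starRingEnd ℂ) (P a b) from rfl]
    rw [mul_comm, Complex.mul_conj, Complex.sq_norm]
  rw [h1]
  rw [show ∑ b : B, ∑ a : A, ((‖P a b‖ ^ 2 : ℝ) : ℂ)
      = ((∑ b : B, ∑ a : A, ‖P a b‖ ^ 2 : ℝ) : ℂ) from by push_cast; rfl]
  rw [Complex.ofReal_re, Fintype.sum_prod_type, Finset.sum_comm]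


/-- **Uhlmann's theorem** (finite-dimensional form used in the QITE correctness proof).
If two unit vectors `η, ν` on a bipartite system `A × B` have reduced density
matrices on `A` that are within `δ` of each other in trace norm, then there is a
unitary `V` acting on `B` alone such that `‖η − (I ⊗ V) ν‖ ≤ 2 √δ` in Euclidean norm. -/
theorem uhlmann_theorem
    {A B : Type*} [Fintype A] [Fintype B] [DecidableEq A] [DecidableEq B]
    [Nonempty A] [Nonempty B]
    (η ν : A × B → ℂ)
    (hη : ∑ x : A × B, ‖(η x)‖ ^ 2 = 1)
    (hν : ∑ x : A × B, ‖(ν x)‖ ^ 2 = 1)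
    (ηA νA : Matrix A A ℂ)
    (hηA : ∀ a a', ηA a a' = ∑ b : B, η (a, b) * star (η (a', b)))
    (hνA : ∀ a a', νA a a' = ∑ b : B, ν (a, b) * star (ν (a', b)))
    (δ : ℝ) (hδ : 0 ≤ δ)
    (htr : ((Matrix.posSemidef_conjTranspose_mul_self (ηA - νA)).sqrt).trace.re ≤ δ) :
    ∃ V : Matrix B B ℂ, V ∈ Matrix.unitaryGroup B ℂ ∧
      Real.sqrt (∑ x : A × B,
        ‖η x - ∑ b' : B, V x.2 b' * ν (x.1, b')‖ ^ 2) ≤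
        2 * Real.sqrt δ := by
  classical
  set M : Matrix A B ℂ := Matrix.of fun a b => η (a, b) with hM
  set N : Matrix A B ℂ := Matrix.of fun a b => ν (a, b) with hN
  have hMη : ηA = M * Mᴴ := by
    ext a a'
    rw [hηA, Matrix.mul_apply]
    apply Finset.sum_congr rfl
    intro bb _
    rw [Matrix.conjTranspose_apply]
    rfl
  have hNν : νA = N * Nᴴ := by
    ext a a'
    rw [hνA, Matrix.mul_apply]
    apply Finset.sum_congr rfl
    intro bb _
    rw [Matrix.conjTranspose_apply]
    rfl
  have htrM : (M * Mᴴ).trace = 1 := trace_outer_eq_one η hη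
  have htrN : (N * Nᴴ).trace = 1 := trace_outer_eq_one ν hν
  have hρ : (M * Mᴴ).PosSemidef := Matrix.posSemidef_self_mul_conjTranspose M
  have hσ : (N * Nᴴ).PosSemidef := Matrix.posSemidef_self_mul_conjTranspose N
  set a : Matrix A A ℂ := hρ.sqrt with hadef
  set b : Matrix A A ℂ := hσ.sqrt with hbdef
  have ha : a.PosSemidef := hρ.posSemidef_sqrt
  have hb : b.PosSemidef := hσ.posSemidef_sqrt
  have haa : a * a = M * Mᴴ := hρ.sqrt_mul_self
  have hbb : b * b = N * Nᴴ := hσ.sqrt_mul_self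
  -- Powers–Størmer
  have hPS : ((a - b) * (a - b)).trace.re ≤ δ := by
    refine le_trans (powers_stormer ha hb) ?_
    have : a * a - b * b = ηA - νA := by rw [haa, hbb, hMη, hNν]
    rw [this]
    exact htr
  -- trace identity
  have hexp : (a - b) * (a - b) = a * a + b * b - a * b - b * a := by noncomm_ring
  have htrab : ((a - b) * (a - b)).trace
      = 2 - ((a * b).trace + (b * a).trace) := by
    rw [hexp, Matrix.trace_sub, Matrix.trace_sub, Matrix.trace_add, haa, hbb, htrM, htrN]
    ring
  have hba : (b * a).trace = (a * b).trace := Matrix.trace_mul_comm b a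
  have htre : 1 - δ / 2 ≤ (a * b).trace.re := by
    have h1 : ((a - b) * (a - b)).trace.re = 2 - 2 * (a * b).trace.re := by
      rw [htrab, hba]
      simp [Complex.sub_re, Complex.add_re]
      ring
    rw [h1] at hPS
    linarith
  -- trace norm chain
  have h1 : tn (Mᴴ * N) = tn (a * N) := by
    apply tn_congr
    rw [Matrix.conjTranspose_mul, Matrix.conjTranspose_conjTranspose,
      Matrix.conjTranspose_mul, ha.1.eq]
    calc Nᴴ * M * (Mᴴ * N) = Nᴴ * (M * Mᴴ) * N := by simp only [Matrix.mul_assoc]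
    _ = Nᴴ * (a * a) * N := by rw [haa]
    _ = Nᴴ * a * (a * N) := by simp only [Matrix.mul_assoc]
  have h2 : tn (a * N) = tn (Nᴴ * a) := by
    have := tn_conjTranspose (a * N)
    rw [Matrix.conjTranspose_mul, ha.1.eq] at this
    exact this.symm
  have h3 : tn (Nᴴ * a) = tn (b * a) := by
    apply tn_congr
    rw [Matrix.conjTranspose_mul, Matrix.conjTranspose_conjTranspose,
      Matrix.conjTranspose_mul, ha.1.eq, hb.1.eq]
    calc a * N * (Nᴴ * a) = a * (N * Nᴴ) * a := by simp only [Matrix.mul_assoc]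
    _ = a * (b * b) * a := by rw [hbb]
    _ = a * b * (b * a) := by simp only [Matrix.mul_assoc]
  have h4 : 1 - δ / 2 ≤ tn (Mᴴ * N) := by
    rw [h1, h2, h3]
    refine le_trans ?_ (trace_re_le_tn (b * a))
    rw [hba]
    exact htre
  -- polar step
  obtain ⟨U, hU, hUtr⟩ := polar_exists (Mᴴ * N)
  refine ⟨Uᵀ, ?_, ?_⟩
  · rw [Matrix.mem_unitaryGroup_iff, Matrix.star_eq_conjTranspose]
    rw [show (Uᵀ)ᴴ = (Uᴴ)ᵀ from rfl, ← Matrix.transpose_mul]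
    rw [show Uᴴ * U = 1 from by
      rw [← Matrix.star_eq_conjTranspose]; exact Matrix.mem_unitaryGroup_iff'.mp hU]
    exact Matrix.transpose_one
  · set K : Matrix A B ℂ := M - N * U with hK
    have hentry : ∀ x : A × B,
        η x - ∑ b' : B, Uᵀ x.2 b' * ν (x.1, b') = K x.1 x.2 := by
      intro x
      rw [hK, Matrix.sub_apply, Matrix.mul_apply]
      congr 1
      apply Finset.sum_congr rfl
      intro b' _
      rw [Matrix.transpose_apply, mul_comm]
      rfl
    have hsum : ∑ x : A × B, ‖η x - ∑ b' : B, Uᵀ x.2 b' * ν (x.1, b')‖ ^ 2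
        = (Kᴴ * K).trace.re := by
      rw [frob_re]
      exact Finset.sum_congr rfl fun x _ => by rw [hentry x]
    have hKexp : Kᴴ * K = Mᴴ * M + (N * U)ᴴ * (N * U) - Mᴴ * (N * U) - (N * U)ᴴ * M := by
      rw [hK, Matrix.conjTranspose_sub, Matrix.sub_mul, Matrix.mul_sub, Matrix.mul_sub]
      abel
    have htrMM : (Mᴴ * M).trace = 1 := by rw [Matrix.trace_mul_comm]; exact htrM
    have htrNU : ((N * U)ᴴ * (N * U)).trace = 1 := by
      rw [Matrix.conjTranspose_mul, Matrix.trace_mul_comm]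
      calc (N * U * (Uᴴ * Nᴴ)).trace = (N * (U * Uᴴ) * Nᴴ).trace := by
            simp only [Matrix.mul_assoc]
      _ = 1 := by
            rw [show U * Uᴴ = 1 from by
              rw [← Matrix.star_eq_conjTranspose]; exact Matrix.mem_unitaryGroup_iff.mp hU]
            rw [Matrix.mul_one, htrN]
    have hcross : ((N * U)ᴴ * M).trace = star ((Mᴴ * (N * U)).trace) := by
      conv_rhs => rw [← Matrix.trace_conjTranspose, Matrix.conjTranspose_mul,
        Matrix.conjTranspose_conjTranspose]
    have hcross_re : (((N * U)ᴴ * M).trace).re = ((Mᴴ * (N * U)).trace).re := by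
      rw [hcross]
      exact Complex.conj_re _
    have hMNU : (Mᴴ * (N * U)).trace.re = tn (Mᴴ * N) := by
      rw [← Matrix.mul_assoc, ← hUtr]
    have hKtr : (Kᴴ * K).trace.re ≤ δ := by
      rw [hKexp, Matrix.trace_sub, Matrix.trace_sub, Matrix.trace_add, htrMM, htrNU]
      rw [Complex.sub_re, Complex.sub_re, Complex.add_re, hcross_re, Complex.one_re, hMNU]
      linarith
    rw [hsum]
    calc Real.sqrt ((Kᴴ * K).trace.re) ≤ Real.sqrt δ := Real.sqrt_le_sqrt hKtr
    _ ≤ 2 * Real.sqrt δ := by nlinarith [Real.sqrt_nonneg δ]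
end

section
/- Let H be a self-adjoint (Hermitian) N×N complex matrix, let Ψ ∈ ℂ^N be a unit vector, and let Δτ > 0. For each natural number l define n_l := ‖exp(−l·Δτ·H) Ψ‖⁻¹ and Φ_l := n_l · exp(−l·Δτ·H) Ψ (these are well defined since exp(−l·Δτ·H) is invertible, so exp(−l·Δτ·H)Ψ ≠ 0). Then for all natural numbers l, l', r with l + l' = 2r, the inner product satisfies ⟨Φ_l, Φ_{l'}⟩ = n_l · n_{l'} / n_r². -/
open Matrix NormedSpace Finset

lemma qlanczos_star_dot (N : ℕ) (M : Matrix (Fin N) (Fin N) ℂ) (x y : Fin N → ℂ) :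
    star (M.mulVec x) ⬝ᵥ y = star x ⬝ᵥ Mᴴ.mulVec y := by
  rw [Matrix.star_mulVec, Matrix.dotProduct_mulVec]

lemma qlanczos_star_dot' (N : ℕ) (M : Matrix (Fin N) (Fin N) ℂ) (x y : Fin N → ℂ) :
    star x ⬝ᵥ M.mulVec y = star (Mᴴ.mulVec x) ⬝ᵥ y := by
  rw [qlanczos_star_dot, Matrix.conjTranspose_conjTranspose]

lemma qlanczos_self_dot (N : ℕ) (v : Fin N → ℂ) :
    star v ⬝ᵥ v = ((∑ i, ‖v i‖ ^ 2 : ℝ) : ℂ) := by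
  rw [dotProduct]
  push_cast
  refine Finset.sum_congr rfl fun i _ => ?_
  rw [Pi.star_apply, RCLike.star_def, mul_comm, Complex.mul_conj,
    ← Complex.ofReal_pow, Complex.sq_norm]

/-- **QLanczos overlap identity.**  With `Φ_l` the normalized imaginary-time-evolved
states `Φ_l = n_l · exp(−l Δτ H) Ψ`, `n_l = ‖exp(−l Δτ H) Ψ‖⁻¹` (Euclidean norm),
the overlap matrix elements satisfy `⟨Φ_l, Φ_{l'}⟩ = n_l n_{l'} / n_r²` whenever
`l + l' = 2r`.  The inner product `⟨x, y⟩ = ∑ i, conj (x i) * y i` is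
conjugate-linear in the first argument. -/
theorem qlanczos_overlap
    {N : ℕ} (H : Matrix (Fin N) (Fin N) ℂ) (hH : H.IsHermitian)
    (Ψ : Fin N → ℂ) (hΨ : ∑ i, ‖Ψ i‖ ^ 2 = 1)
    (Δτ : ℝ) (hΔτ : 0 < Δτ)
    (n : ℕ → ℝ) (Φ : ℕ → Fin N → ℂ)
    (hn : ∀ l : ℕ, n l =
      (Real.sqrt (∑ i, ‖
        (NormedSpace.exp ((-(l * Δτ : ℝ) : ℂ) • H)).mulVec Ψ i‖ ^ 2))⁻¹)
    (hΦ : ∀ l : ℕ, Φ l =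
      (n l : ℂ) • (NormedSpace.exp ((-(l * Δτ : ℝ) : ℂ) • H)).mulVec Ψ) :
    ∀ l l' r : ℕ, l + l' = 2 * r →
      star (Φ l) ⬝ᵥ Φ l' = ((n l * n l' / (n r) ^ 2 : ℝ) : ℂ) := by
  intro l l' r hr
  have hcomm : ∀ a b : ℂ, Commute (a • H) (b • H) :=
    fun a b => ((Commute.refl H).smul_left a).smul_right b
  have hherm : ∀ k : ℕ, (NormedSpace.exp ((-(k * Δτ : ℝ) : ℂ) • H))ᴴ
      = NormedSpace.exp ((-(k * Δτ : ℝ) : ℂ) • H) := by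
    intro k
    have h1 : ((-(k * Δτ : ℝ) : ℂ) • H).IsHermitian := by
      rw [Matrix.IsHermitian, Matrix.conjTranspose_smul, hH.eq]
      congr 1
      simp [Complex.ext_iff]
    exact h1.exp
  have hmul : NormedSpace.exp ((-(l * Δτ : ℝ) : ℂ) • H)
        * NormedSpace.exp ((-(l' * Δτ : ℝ) : ℂ) • H)
      = NormedSpace.exp ((-(r * Δτ : ℝ) : ℂ) • H)
        * NormedSpace.exp ((-(r * Δτ : ℝ) : ℂ) • H) := by
    rw [← Matrix.exp_add_of_commute _ _ (hcomm _ _),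
        ← Matrix.exp_add_of_commute _ _ (hcomm _ _), ← add_smul, ← add_smul]
    congr 2
    have h3 : ((l : ℂ)) + l' = 2 * r := by exact_mod_cast hr
    push_cast
    linear_combination (-(Δτ : ℂ)) * h3
  -- the central overlap computation
  have hdot : star ((NormedSpace.exp ((-(l * Δτ : ℝ) : ℂ) • H)).mulVec Ψ)
        ⬝ᵥ (NormedSpace.exp ((-(l' * Δτ : ℝ) : ℂ) • H)).mulVec Ψ
      = ((∑ i, ‖
          (NormedSpace.exp ((-(r * Δτ : ℝ) : ℂ) • H)).mulVec Ψ i‖ ^ 2 : ℝ) : ℂ) := by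
    rw [qlanczos_star_dot, hherm, Matrix.mulVec_mulVec, hmul,
        ← Matrix.mulVec_mulVec, qlanczos_star_dot', hherm, qlanczos_self_dot]
  set S : ℝ := ∑ i, ‖
    (NormedSpace.exp ((-(r * Δτ : ℝ) : ℂ) • H)).mulVec Ψ i‖ ^ 2 with hS
  have hS0 : 0 ≤ S := Finset.sum_nonneg fun i _ => sq_nonneg _
  have hnr : (n r) ^ 2 = S⁻¹ := by
    rw [hn r, inv_pow]
    congr 1
    exact Real.sq_sqrt hS0
  rw [hΦ l, hΦ l', star_smul, smul_dotProduct, dotProduct_smul, hdot,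
    hnr, division_def, inv_inv, RCLike.star_def, Complex.conj_ofReal, smul_eq_mul, smul_eq_mul]
  push_cast
  ring
end

section
/- Let H be a self-adjoint (Hermitian) N×N complex matrix, let Ψ ∈ ℂ^N be a unit vector, and let Δτ > 0. For each natural number l define n_l := ‖exp(−l·Δτ·H) Ψ‖⁻¹ and Φ_l := n_l · exp(−l·Δτ·H) Ψ. Then for all natural numbers l, l', r with l + l' = 2r, the Hamiltonian matrix element satisfies ⟨Φ_l, H Φ_{l'}⟩ = ⟨Φ_l, Φ_{l'}⟩ · ⟨Φ_r, H Φ_r⟩. -/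
open Matrix NormedSpace Finset

/-- **QLanczos Hamiltonian matrix-element identity.**  With `Φ_l` the normalized
imaginary-time-evolved states `Φ_l = n_l · exp(−l Δτ H) Ψ`,
`n_l = ‖exp(−l Δτ H) Ψ‖⁻¹` (Euclidean norm), the Krylov Hamiltonian matrix
elements satisfy `⟨Φ_l, H Φ_{l'}⟩ = ⟨Φ_l, Φ_{l'}⟩ · ⟨Φ_r, H Φ_r⟩` whenever
`l + l' = 2r`.  The inner product `⟨x, y⟩ = ∑ i, conj (x i) * y i` is
conjugate-linear in the first argument. -/
theorem qlanczos_hamiltonian_matrix_element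
    {N : ℕ} (H : Matrix (Fin N) (Fin N) ℂ) (hH : H.IsHermitian)
    (Ψ : Fin N → ℂ) (hΨ : ∑ i, ‖Ψ i‖ ^ 2 = 1)
    (Δτ : ℝ) (hΔτ : 0 < Δτ)
    (n : ℕ → ℝ) (Φ : ℕ → Fin N → ℂ)
    (hn : ∀ l : ℕ, n l =
      (Real.sqrt (∑ i, ‖
        (NormedSpace.exp ((-(l * Δτ : ℝ) : ℂ) • H)).mulVec Ψ i‖ ^ 2))⁻¹)
    (hΦ : ∀ l : ℕ, Φ l =
      (n l : ℂ) • (NormedSpace.exp ((-(l * Δτ : ℝ) : ℂ) • H)).mulVec Ψ) :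
    ∀ l l' r : ℕ, l + l' = 2 * r →
      star (Φ l) ⬝ᵥ H.mulVec (Φ l') =
        (star (Φ l) ⬝ᵥ Φ l') * (star (Φ r) ⬝ᵥ H.mulVec (Φ r)) := by
  set E : ℕ → Matrix (Fin N) (Fin N) ℂ :=
    fun k => NormedSpace.exp ((-(k * Δτ : ℝ) : ℂ) • H) with hEdef
  have key : ∀ (M : Matrix (Fin N) (Fin N) ℂ) (x w : Fin N → ℂ),
      star (M.mulVec x) ⬝ᵥ w = star x ⬝ᵥ (Mᴴ.mulVec w) := by
    intro M x w
    rw [Matrix.star_mulVec, Matrix.dotProduct_mulVec]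
  have hEherm : ∀ k, (E k)ᴴ = E k := by
    intro k
    have h1 : ((-(k * Δτ : ℝ) : ℂ) • H).IsHermitian := by
      simp [Matrix.IsHermitian, Matrix.conjTranspose_smul, hH.eq, Complex.star_def,
        Complex.conj_ofReal]
    exact h1.exp
  have hEE : ∀ a b : ℕ, E a * E b = E (a + b) := by
    intro a b
    have hc : Commute ((-(a * Δτ : ℝ) : ℂ) • H) ((-(b * Δτ : ℝ) : ℂ) • H) :=
      ((Commute.refl H).smul_left _).smul_right _
    rw [hEdef]
    rw [← Matrix.exp_add_of_commute _ _ hc]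
    congr 1
    rw [← add_smul]
    congr 1
    push_cast
    ring
  have hcomm : ∀ k, H * E k = E k * H := by
    intro k
    have hc : Commute H ((-(k * Δτ : ℝ) : ℂ) • H) := ((Commute.refl H).smul_right _)
    letI : SeminormedRing (Matrix (Fin N) (Fin N) ℂ) := Matrix.linftyOpSemiNormedRing
    letI : NormedRing (Matrix (Fin N) (Fin N) ℂ) := Matrix.linftyOpNormedRing
    letI : NormedAlgebra ℂ (Matrix (Fin N) (Fin N) ℂ) := Matrix.linftyOpNormedAlgebra
    exact hc.exp_right
  have hE0 : ∀ k : ℕ, NormedSpace.exp (((k * Δτ : ℝ) : ℂ) • H) * E k = 1 := by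
    intro k
    have hc : Commute (((k * Δτ : ℝ) : ℂ) • H) ((-(k * Δτ : ℝ) : ℂ) • H) :=
      ((Commute.refl H).smul_left _).smul_right _
    rw [hEdef]
    rw [← Matrix.exp_add_of_commute _ _ hc]
    have h0 : (((k * Δτ : ℝ) : ℂ) • H) + ((-(k * Δτ : ℝ) : ℂ) • H) = 0 := by
      rw [← add_smul]
      norm_num
    rw [h0, NormedSpace.exp_zero]
  have hΨne : Ψ ≠ 0 := by
    intro h
    rw [h] at hΨ
    simp at hΨ
  have hEne : ∀ k, (E k).mulVec Ψ ≠ 0 := by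
    intro k h
    apply hΨne
    have h2 : (1 : Matrix (Fin N) (Fin N) ℂ).mulVec Ψ = 0 := by
      rw [← hE0 k, ← Matrix.mulVec_mulVec, h, Matrix.mulVec_zero]
    simpa using h2
  have hns : ∀ (v : Fin N → ℂ), star v ⬝ᵥ v = ((∑ i, ‖v i‖ ^ 2 : ℝ) : ℂ) := by
    intro v
    push_cast
    simp [dotProduct, Complex.mul_conj, mul_comm, Complex.normSq_eq_norm_sq]
  have hreal : ∀ (s : ℝ), 0 < s →
      ((((Real.sqrt s)⁻¹ : ℝ)) : ℂ) * ((((Real.sqrt s)⁻¹ : ℝ)) : ℂ) * ((s : ℝ) : ℂ) = 1 := by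
    intro s hs
    have hr' : (Real.sqrt s)⁻¹ * (Real.sqrt s)⁻¹ * s = 1 := by
      rw [← mul_inv, Real.mul_self_sqrt hs.le]
      exact inv_mul_cancel₀ hs.ne'
    calc ((((Real.sqrt s)⁻¹ : ℝ)) : ℂ) * ((((Real.sqrt s)⁻¹ : ℝ)) : ℂ) * ((s : ℝ) : ℂ)
        = (((Real.sqrt s)⁻¹ * (Real.sqrt s)⁻¹ * s : ℝ) : ℂ) := by push_cast; ring
      _ = 1 := by rw [hr']; norm_num
  have hnorm : ∀ k, (n k : ℂ) * (n k : ℂ) * (star ((E k).mulVec Ψ) ⬝ᵥ (E k).mulVec Ψ) = 1 := by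
    intro k
    have hpos : 0 < ∑ i, ‖((E k).mulVec Ψ) i‖ ^ 2 := by
      rcases Function.ne_iff.mp (hEne k) with ⟨i, hi⟩
      exact Finset.sum_pos' (fun j _ => by positivity)
        ⟨i, Finset.mem_univ i, pow_pos (norm_pos_iff.mpr hi) 2⟩
    rw [hns, hn k]
    simp only [hEdef] at hpos ⊢
    exact hreal _ hpos
  intro l l' r hr
  have hH2 : ∀ a b : ℕ, star ((E a).mulVec Ψ) ⬝ᵥ H.mulVec ((E b).mulVec Ψ) =
      star Ψ ⬝ᵥ (H * E (a + b)).mulVec Ψ := by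
    intro a b
    rw [key, hEherm, Matrix.mulVec_mulVec, Matrix.mulVec_mulVec,
      ← hcomm a, Matrix.mul_assoc, hEE]
  have hS2 : ∀ a b : ℕ, star ((E a).mulVec Ψ) ⬝ᵥ ((E b).mulVec Ψ) =
      star Ψ ⬝ᵥ (E (a + b)).mulVec Ψ := by
    intro a b
    rw [key, hEherm, Matrix.mulVec_mulVec, hEE]
  have hone : (n r : ℂ) * (n r : ℂ) * (star Ψ ⬝ᵥ (E (r + r)).mulVec Ψ) = 1 := by
    rw [← hS2 r r]
    exact hnorm r
  have hrr : r + r = l + l' := by omega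
  rw [hrr] at hone
  rw [hΦ l, hΦ l', hΦ r]
  simp only [star_smul, Complex.star_def, Complex.conj_ofReal, Matrix.mulVec_smul,
    smul_dotProduct, dotProduct_smul, smul_eq_mul]
  rw [hH2 l l', hS2 l l', hH2 r r, hrr]
  linear_combination
    (-((n l : ℂ) * (n l') * (star Ψ ⬝ᵥ (H * E (l + l')).mulVec Ψ))) * hone
end

section
/- Let H be a Hermitian N×N complex matrix, let β be a real number, and let {e_i} be the standard orthonormal basis of ℂ^N. Define P_i := ⟨e_i, exp(−βH) e_i⟩ (a positive real number, since exp(−βH) is positive definite), Z := trace(exp(−βH)), and φ_i := P_i^{−1/2} · exp(−(β/2)H) e_i. Then for every index i', the sum Σ_i P_i · |⟨e_{i'}, φ_i⟩|² = P_{i'}. Equivalently, dividing by Z: the Gibbs probability distribution (P_i/Z)_i is stationary under the Markov chain with transition probabilities p(i → i') = |⟨e_{i'}, φ_i⟩|². -/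
open Matrix NormedSpace Finset

/-- **METTS sampling has the Gibbs distribution as stationary distribution.**
With `P i = ⟨e_i, exp(−βH) e_i⟩` (a positive real, since `exp(−βH)` is positive
definite) and the METTS `φ_i = P_i^{−1/2} · exp(−(β/2)H) e_i`, one has for every
basis index `i'`:  `∑ i, P i · |⟨e_{i'}, φ_i⟩|² = P i'`, i.e. the Gibbs weights
are stationary under the collapse probabilities `p(i → i') = |⟨e_{i'}, φ_i⟩|²`.
The inner product `⟨x, y⟩ = ∑ i, conj (x i) * y i` is conjugate-linear in the
first argument, and `e i = Pi.single i 1` is the standard basis. -/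
theorem metts_gibbs_stationary
    {N : ℕ} (H : Matrix (Fin N) (Fin N) ℂ) (hH : H.IsHermitian) (β : ℝ)
    (P : Fin N → ℝ) (φ : Fin N → Fin N → ℂ)
    (hP : ∀ i, (P i : ℂ) =
      star (Pi.single i (1 : ℂ)) ⬝ᵥ
        (NormedSpace.exp ((-β : ℂ) • H)).mulVec (Pi.single i (1 : ℂ)))
    (hφ : ∀ i, φ i =
      ((Real.sqrt (P i))⁻¹ : ℂ) •
        (NormedSpace.exp ((-(β / 2) : ℂ) • H)).mulVec (Pi.single i (1 : ℂ))) :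
    ∀ i' : Fin N,
      ∑ i, P i * ‖star (Pi.single i' (1 : ℂ)) ⬝ᵥ φ i‖ ^ 2 = P i' := by
  intro i'
  set A := NormedSpace.exp ((-(β / 2) : ℂ) • H) with hAdef
  -- dot product with a standard basis vector picks out a coordinate
  have hdot : ∀ (w : Fin N → ℂ) (j : Fin N),
      star (Pi.single j (1 : ℂ)) ⬝ᵥ w = w j := by
    intro w j
    simp [dotProduct, Pi.single_apply, apply_ite (star : ℂ → ℂ)]
  have hentry : ∀ (M : Matrix (Fin N) (Fin N) ℂ) (i j : Fin N),
      M.mulVec (Pi.single i (1 : ℂ)) j = M j i := by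
    intro M i j
    simp [Matrix.mulVec, dotProduct, Pi.single_apply]
  -- exp(−βH) = A * A
  have hexp : NormedSpace.exp ((-β : ℂ) • H) = A * A := by
    have hsplit : ((-β : ℂ) • H) = ((-(β / 2) : ℂ) • H) + ((-(β / 2) : ℂ) • H) := by
      rw [← add_smul]; ring_nf
    rw [hsplit]
    exact Matrix.exp_add_of_commute _ _ (Commute.refl _)
  -- A is Hermitian
  have hAH : Aᴴ = A := by
    rw [hAdef, ← Matrix.exp_conjTranspose]
    congr 1
    rw [conjTranspose_smul, hH.eq]
    congr 1
    simp
  have hAconj : ∀ i j, A i j = star (A j i) := by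
    intro i j
    conv_lhs => rw [← hAH]
    simp [conjTranspose_apply]
  -- P i = ∑ j, |A j i|²
  have hPr : ∀ i, P i = ∑ j, Complex.normSq (A j i) := by
    intro i
    have h1 : (P i : ℂ) = ∑ j, A i j * A j i := by
      rw [hP i, hexp, hdot, hentry, Matrix.mul_apply]
    have h2 : (P i : ℂ) = ((∑ j, Complex.normSq (A j i) : ℝ) : ℂ) := by
      rw [h1]
      push_cast
      refine Finset.sum_congr rfl fun j _ => ?_
      simp [hAconj i j, Complex.star_def, mul_comm, Complex.mul_conj]
    exact_mod_cast h2
  have hPnonneg : ∀ i, 0 ≤ P i := by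
    intro i
    rw [hPr i]
    exact Finset.sum_nonneg fun j _ => Complex.normSq_nonneg _
  -- each summand equals |A i' i|²
  have hterm : ∀ i, P i * ‖star (Pi.single i' (1 : ℂ)) ⬝ᵥ φ i‖ ^ 2
      = Complex.normSq (A i' i) := by
    intro i
    have hval : star (Pi.single i' (1 : ℂ)) ⬝ᵥ φ i
        = ((Real.sqrt (P i))⁻¹ : ℂ) * A i' i := by
      rw [hφ i, hdot]
      simp [hentry]
    rw [hval]
    rcases eq_or_lt_of_le (hPnonneg i) with h0 | hpos
    · -- P i = 0 forces A i' i = 0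
      have hz : Complex.normSq (A i' i) = 0 := by
        have hsum : ∑ j, Complex.normSq (A j i) = 0 := by rw [← hPr i, ← h0]
        have := (Finset.sum_eq_zero_iff_of_nonneg
          (fun j _ => Complex.normSq_nonneg (A j i))).mp hsum i' (Finset.mem_univ i')
        exact this
      rw [hz, ← h0]
      simp
    · have hsq : Real.sqrt (P i) ^ 2 = P i := Real.sq_sqrt (hPnonneg i)
      have hs : Real.sqrt (P i) ≠ 0 := by positivity
      rw [Complex.sq_norm, Complex.normSq_mul]
      have : Complex.normSq ((Real.sqrt (P i))⁻¹ : ℂ) = (P i)⁻¹ := by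
        rw [show ((Real.sqrt (P i))⁻¹ : ℂ) = ((Real.sqrt (P i))⁻¹ : ℝ) by norm_cast]
        rw [Complex.normSq_ofReal, ← mul_inv, Real.mul_self_sqrt (hPnonneg i)]
      rw [this]
      field_simp
  calc ∑ i, P i * ‖star (Pi.single i' (1 : ℂ)) ⬝ᵥ φ i‖ ^ 2
      = ∑ i, Complex.normSq (A i' i) := Finset.sum_congr rfl fun i _ => hterm i
    _ = ∑ i, Complex.normSq (A i i') := by
        refine Finset.sum_congr rfl fun i _ => ?_
        simp [hAconj i' i, Complex.star_def, Complex.normSq_conj]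
    _ = P i' := (hPr i').symm
end

section
/- Let L ≥ 1 be a natural number, let P : Matrix (ZMod L) (ZMod L) ℂ be the cyclic shift matrix with entries P_{μν} = 1 if μ = ν + 1 (in ZMod L) and 0 otherwise, and let ξ : ZMod L → ℝ with ξ_μ > 0 for all μ. Then det(I + P · diagonal(ξ)) = 1 − (−1)^L · Π_μ ξ_μ, and consequently det(I + P · diagonal(ξ)) / det(I + diagonal(ξ)) = (1 − (−1)^L Π_μ ξ_μ) / Π_μ (1 + ξ_μ). -/
open Matrix Finset

private lemma shift_perm_eq (L : ℕ) [NeZero L] (h10 : (1 : ZMod L) ≠ 0)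
    (σ : Equiv.Perm (ZMod L)) (hall : ∀ i, σ i = i ∨ σ i = i + 1)
    (μ : ZMod L) (hμ : σ μ = μ + 1) : σ = Equiv.addRight 1 := by
  have key : ∀ k : ℕ, σ (μ + k) = μ + k + 1 := by
    intro k
    induction k with
    | zero => simpa using hμ
    | succ k ih =>
      rcases hall (μ + k + 1) with h | h
      · exfalso
        have := σ.injective (ih.trans h.symm)
        have : (1 : ZMod L) = 0 := by
          have := congrArg (· - (μ + k)) this
          simpa using this.symm
        exact h10 this
      · push_cast
        linear_combination (norm := ring_nf) h
  ext x
  have hx : x = μ + ((x - μ).val : ZMod L) := by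
    rw [ZMod.natCast_val, ZMod.cast_id]; ring
  rw [Equiv.coe_addRight, hx, key]

private lemma shift_det (L : ℕ) [NeZero L]
    (P : Matrix (ZMod L) (ZMod L) ℂ)
    (hP : ∀ μ ν : ZMod L, P μ ν = if μ = ν + 1 then (1 : ℂ) else 0)
    (f : ZMod L → ℂ) :
    (1 + P * Matrix.diagonal f).det = 1 - (-1 : ℂ) ^ L * ∏ μ : ZMod L, f μ := by
  have hM : ∀ i j, (1 + P * Matrix.diagonal f) i j
      = (if i = j then 1 else 0) + (if i = j + 1 then f j else 0) := by
    intro i j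
    rw [Matrix.add_apply, Matrix.mul_diagonal, Matrix.one_apply, hP]
    by_cases h : i = j + 1 <;> simp [h]
  rcases Nat.lt_or_ge L 2 with h2 | h2
  · -- L = 1
    obtain rfl : L = 1 := by have := NeZero.one_le (n := L); omega
    rw [Matrix.det_unique, hM, if_pos rfl,
      if_pos (Subsingleton.elim (α := ZMod 1) _ _), Fintype.prod_unique]
    ring
  · -- L = n + 2
    obtain ⟨n, rfl⟩ : ∃ n, L = n + 2 := ⟨L - 2, by omega⟩
    have h10 : (1 : ZMod (n + 2)) ≠ 0 := by
      haveI : Fact (1 < n + 2) := ⟨by omega⟩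
      exact one_ne_zero
    set c : Equiv.Perm (ZMod (n + 2)) := Equiv.addRight 1 with hc
    have h1c : (1 : Equiv.Perm (ZMod (n + 2))) ≠ c := by
      intro h
      have := congrArg (· (0 : ZMod (n + 2))) h
      simp [hc] at this
      exact h10 this.symm
    rw [Matrix.det_apply]
    have hvanish : ∀ σ ∈ (Finset.univ : Finset (Equiv.Perm (ZMod (n + 2)))),
        σ ∉ ({1, c} : Finset (Equiv.Perm (ZMod (n + 2)))) →
        Equiv.Perm.sign σ • ∏ i, (1 + P * Matrix.diagonal f) (σ i) i = 0 := by
      intro σ _ hσ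
      rw [Finset.mem_insert, Finset.mem_singleton] at hσ
      push_neg at hσ
      have : ∃ i, (1 + P * Matrix.diagonal f) (σ i) i = 0 := by
        by_contra hcon
        push_neg at hcon
        have hall : ∀ i, σ i = i ∨ σ i = i + 1 := by
          intro i
          by_contra h
          push_neg at h
          exact hcon i (by rw [hM, if_neg h.1, if_neg h.2, add_zero])
        by_cases hex : ∃ μ, σ μ = μ + 1
        · obtain ⟨μ, hμ⟩ := hex
          exact hσ.2 (shift_perm_eq (n + 2) h10 σ hall μ hμ)
        · push_neg at hex
          apply hσ.1
          ext x
          rcases hall x with h | h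
          · simpa using h
          · exact absurd h (hex x)
      obtain ⟨i, hi⟩ := this
      have hz : ∏ i, (1 + P * Matrix.diagonal f) (σ i) i = 0 :=
        Finset.prod_eq_zero (Finset.mem_univ i) hi
      rw [hz, smul_zero]
    rw [← Finset.sum_subset (Finset.subset_univ ({1, c} : Finset (Equiv.Perm (ZMod (n + 2))))) hvanish,
      Finset.sum_pair h1c]
    have hid : ∏ i, (1 + P * Matrix.diagonal f) ((1 : Equiv.Perm (ZMod (n + 2))) i) i = 1 := by
      apply Finset.prod_eq_one
      intro i _
      rw [Equiv.Perm.one_apply, hM, if_pos rfl, if_neg, add_zero]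
      intro h
      exact h10 (by linear_combination -h)
    have hcyc : ∏ i, (1 + P * Matrix.diagonal f) (c i) i = ∏ μ : ZMod (n + 2), f μ := by
      apply Finset.prod_congr rfl
      intro i _
      rw [hc, Equiv.coe_addRight, hM, if_pos rfl, if_neg, zero_add]
      intro h
      exact h10 (by linear_combination h)
    have hsign : Equiv.Perm.sign c = (-1 : ℤˣ) ^ (n + 1) := by
      have heq : c = finRotate (n + 2) := by
        ext i; exact (finRotate_succ_apply i).symm
      have hcy : c.IsCycle := by rw [heq]; exact isCycle_finRotate
      have hsupp : c.support = Finset.univ := by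
        apply Finset.eq_univ_iff_forall.mpr
        intro x
        rw [Equiv.Perm.mem_support, hc, Equiv.coe_addRight]
        intro h
        exact h10 (by linear_combination h - x)
      rw [hcy.sign, hsupp, Finset.card_univ, ZMod.card]
      simp [pow_succ]
    rw [hid, hcyc, Equiv.Perm.sign_one, hsign]
    simp only [one_smul, Units.smul_def, Units.val_pow_eq_pow_val, Units.val_neg, Units.val_one,
      zsmul_eq_mul]
    push_cast
    ring

/-- **Thermofield determinant formula for the finite-temperature complex
polarization of the tight-binding chain.**  With `P` the cyclic shift matrix on
`ZMod L` and positive Boltzmann factors `ξ_μ > 0`,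
`det(I + P·diag ξ) = 1 − (−1)^L ∏_μ ξ_μ`, and consequently
`det(I + P·diag ξ) / det(I + diag ξ) = (1 − (−1)^L ∏_μ ξ_μ) / ∏_μ (1 + ξ_μ)`. -/
theorem thermofield_polarization_determinant
    (L : ℕ) [NeZero L] (hL : 1 ≤ L)
    (P : Matrix (ZMod L) (ZMod L) ℂ)
    (hP : ∀ μ ν : ZMod L, P μ ν = if μ = ν + 1 then (1 : ℂ) else 0)
    (ξ : ZMod L → ℝ) (hξ : ∀ μ, 0 < ξ μ) :
    (1 + P * Matrix.diagonal (fun μ => (ξ μ : ℂ))).det =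
        1 - (-1 : ℂ) ^ L * ∏ μ : ZMod L, (ξ μ : ℂ) ∧
    (1 + P * Matrix.diagonal (fun μ => (ξ μ : ℂ))).det /
        (1 + Matrix.diagonal (fun μ => (ξ μ : ℂ))).det =
      (1 - (-1 : ℂ) ^ L * ∏ μ : ZMod L, (ξ μ : ℂ)) /
        ∏ μ : ZMod L, (1 + (ξ μ : ℂ)) := by
  have hmain := shift_det L P hP (fun μ => (ξ μ : ℂ))
  have hden : (1 + Matrix.diagonal (fun μ => (ξ μ : ℂ))).det
      = ∏ μ : ZMod L, (1 + (ξ μ : ℂ)) := by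
    rw [← Matrix.diagonal_one, Matrix.diagonal_add, Matrix.det_diagonal]
  exact ⟨hmain, by rw [hmain, hden]⟩
end

section
/- Let L ≥ 1 be a natural number and ε : Fin L → ℝ with ε_μ < 0 for every μ (all single-particle levels below the Fermi level). Define Z(β) := (1 − (−1)^L · Π_μ e^{−β ε_μ}) / Π_μ (1 + e^{−β ε_μ}). Then Z(β) tends to (−1)^{L+1} as β → ∞; in particular |Z(β)| → 1. -/
open Finset Filter Real

/-- **Zero-temperature limit of the complex polarization: insulating case.**
If all single-particle levels lie below the Fermi level (`ε_μ < 0` for all `μ`),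
then the finite-temperature complex polarization
`Z(β) = (1 − (−1)^L ∏_μ e^{−β ε_μ}) / ∏_μ (1 + e^{−β ε_μ})`
tends to `(−1)^{L+1}` as `β → ∞`; in particular `|Z(β)| → 1` (insulator). -/
theorem polarization_limit_insulating
    (L : ℕ) (hL : 1 ≤ L) (ε : Fin L → ℝ) (hε : ∀ μ, ε μ < 0)
    (Z : ℝ → ℝ)
    (hZ : ∀ β : ℝ, Z β =
      (1 - (-1 : ℝ) ^ L * ∏ μ, Real.exp (-β * ε μ)) /
        ∏ μ, (1 + Real.exp (-β * ε μ))) :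
    Tendsto Z atTop (nhds ((-1 : ℝ) ^ (L + 1))) ∧
    Tendsto (fun β => |Z β|) atTop (nhds 1) := by
  -- Rewrite Z with numerator and denominator multiplied by ∏ exp(β ε μ)
  have key : ∀ β, Z β =
      ((∏ μ, Real.exp (β * ε μ)) - (-1:ℝ)^L) / ∏ μ, (Real.exp (β * ε μ) + 1) := by
    intro β
    rw [hZ β]
    have hA : (∏ μ, Real.exp (β * ε μ)) ≠ 0 := by positivity
    have hinv : (∏ μ, Real.exp (β * ε μ)) * (∏ μ, Real.exp (-β * ε μ)) = 1 := by
      rw [← Finset.prod_mul_distrib]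
      simp [← Real.exp_add]
    have h1 : (∏ μ, Real.exp (β * ε μ)) - (-1:ℝ)^L
        = (∏ μ, Real.exp (β * ε μ)) * (1 - (-1:ℝ)^L * ∏ μ, Real.exp (-β * ε μ)) := by
      rw [mul_sub, mul_one]
      congr 1
      rw [mul_comm ((-1:ℝ)^L), ← mul_assoc, hinv, one_mul]
    have h2 : (∏ μ, (Real.exp (β * ε μ) + 1))
        = (∏ μ, Real.exp (β * ε μ)) * ∏ μ, (1 + Real.exp (-β * ε μ)) := by
      rw [← Finset.prod_mul_distrib]
      apply Finset.prod_congr rfl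
      intro μ _
      rw [mul_add, mul_one, ← Real.exp_add]
      simp [add_comm]
    rw [h1, h2, mul_div_mul_left _ _ hA]
  -- limits
  have hnum : Tendsto (fun β => (∏ μ, Real.exp (β * ε μ)) - (-1:ℝ)^L) atTop
      (nhds (0 - (-1:ℝ)^L)) := by
    apply Tendsto.sub_const
    have : Tendsto (fun β => ∏ μ : Fin L, Real.exp (β * ε μ)) atTop
        (nhds (∏ _μ : Fin L, (0:ℝ))) := by
      apply tendsto_finset_prod
      intro μ _
      have h1 : Tendsto (fun β : ℝ => β * ε μ) atTop atBot :=
        Tendsto.atTop_mul_const_of_neg (hε μ) tendsto_id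
      exact Real.tendsto_exp_atBot.comp h1
    simpa [Finset.prod_const, zero_pow (Nat.one_le_iff_ne_zero.mp hL)] using this
  have hden : Tendsto (fun β => ∏ μ, (Real.exp (β * ε μ) + 1)) atTop (nhds 1) := by
    have : Tendsto (fun β => ∏ μ : Fin L, (Real.exp (β * ε μ) + 1)) atTop
        (nhds (∏ _μ : Fin L, ((0:ℝ) + 1))) := by
      apply tendsto_finset_prod
      intro μ _
      apply Tendsto.add_const
      have h1 : Tendsto (fun β : ℝ => β * ε μ) atTop atBot :=
        Tendsto.atTop_mul_const_of_neg (hε μ) tendsto_id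
      exact Real.tendsto_exp_atBot.comp h1
    simpa using this
  have hmain : Tendsto Z atTop (nhds ((-1 : ℝ) ^ (L + 1))) := by
    have := hnum.div hden one_ne_zero
    have heq : (0 - (-1:ℝ)^L) / 1 = (-1:ℝ)^(L+1) := by
      rw [div_one, pow_succ]; ring
    rw [heq] at this
    exact this.congr fun β => (key β).symm
  refine ⟨hmain, ?_⟩
  have := hmain.abs
  simpa [abs_pow] using this
end
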